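/- arXiv:2203.10527 — 2 statements merged into one kernel-verified Lean document; each statement's English description precedes it below -/
import Mathlib

section
/- For α ∈ (1,2], λ_k = (kπ/l)² and μ_k = λ_k^{α/2} = (kπ/l)^α, there exist constants 0 < c ≤ C (depending on α, l, T) such that for all ν ∈ (0,1] and t ∈ (0,T], c·ν^{-1/α} t^{1-1/α} ≤ Σ_{k=1}^∞ ∫₀ᵗ e^{-2μ_k ν s} ds ≤ C·ν^{-1/α} t^{1-1/α}. -/
open Real Filter

private lemma stmt2_int_exp {c : ℝ} (hc : 0 < c) (t : ℝ) :
    ∫ s in (0:ℝ)..t, Real.exp (-(c * s)) = (1 - Real.exp (-(c * t))) / c := by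
  have hc' : (-c) ≠ 0 := by intro h; nlinarith
  have h := intervalIntegral.integral_comp_mul_left (a := (0:ℝ)) (b := t)
    (fun x => Real.exp x) (c := -c) hc'
  simp only [neg_mul, smul_eq_mul, mul_zero, neg_zero] at h
  rw [h, integral_exp, Real.exp_zero]
  field_simp
  ring

private lemma stmt2_mvt {α : ℝ} (hα : 1 < α) {a : ℝ} (ha : 0 < a) :
    (α - 1) * (a + 1) ^ (-α) ≤ a ^ (1 - α) - (a + 1) ^ (1 - α) := by
  have hab : a < a + 1 := by linarith
  obtain ⟨ξ, hξ, hslope⟩ := exists_hasDerivAt_eq_slope (fun x => x ^ (1 - α))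
      (fun x => (1 - α) * x ^ (1 - α - 1)) hab
      (fun x hx => ((Real.hasDerivAt_rpow_const
        (Or.inl (by rcases hx with ⟨h1, _⟩; nlinarith : x ≠ 0))).continuousAt).continuousWithinAt)
      (fun x hx => Real.hasDerivAt_rpow_const
        (Or.inl (by rcases hx with ⟨h1, _⟩; nlinarith : x ≠ 0)))
  have hξa : a < ξ := hξ.1
  have hξb : ξ < a + 1 := hξ.2
  have hξpos : 0 < ξ := lt_trans ha hξa
  have h1 : (1 - α - 1) = -α := by ring
  rw [h1] at hslope
  have h2 : (a + 1) ^ (-α) ≤ ξ ^ (-α) :=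
    Real.rpow_le_rpow_of_nonpos hξpos hξb.le (by linarith)
  have h3 : (a + 1) ^ (1 - α) - a ^ (1 - α) = (1 - α) * ξ ^ (-α) := by
    have : a + 1 - a = 1 := by ring
    rw [this, div_one] at hslope
    linarith [hslope]
  nlinarith [h2, h3]

private lemma stmt2_telescope {α : ℝ} (hα : 1 < α) {K : ℕ} (hK : 1 ≤ K) :
    HasSum (fun j : ℕ => ((K : ℝ) + j) ^ (1 - α) - ((K : ℝ) + (j + 1)) ^ (1 - α))
      ((K : ℝ) ^ (1 - α)) := by
  set f : ℕ → ℝ := fun j => ((K : ℝ) + j) ^ (1 - α) with hf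
  have hKpos : (0:ℝ) < K := by exact_mod_cast hK
  have hpos : ∀ j : ℕ, (0:ℝ) < (K : ℝ) + j := fun j => by positivity
  have hnonneg : ∀ j : ℕ, 0 ≤ f j - f (j + 1) := by
    intro j
    have : f (j + 1) ≤ f j := by
      have := Real.rpow_le_rpow_of_nonpos (hpos j)
        (by push_cast; linarith : (K : ℝ) + j ≤ (K : ℝ) + (j + 1)) (by linarith : 1 - α ≤ 0)
      simpa [hf] using this
    linarith
  have hpart : ∀ n : ℕ, ∑ j ∈ Finset.range n, (f j - f (j + 1)) = f 0 - f n :=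
    fun n => Finset.sum_range_sub' f n
  have hsum : Summable fun j : ℕ => f j - f (j + 1) := by
    apply summable_of_sum_range_le (c := f 0) hnonneg
    intro n
    rw [hpart n]
    have : 0 ≤ f n := Real.rpow_nonneg (hpos n).le _
    linarith
  have htend : Tendsto (fun n : ℕ => f n) atTop (nhds 0) := by
    have h1 : Tendsto (fun n : ℕ => (K : ℝ) + n) atTop atTop :=
      tendsto_atTop_add_const_left atTop _ tendsto_natCast_atTop_atTop
    have h2 := (tendsto_rpow_neg_atTop (by linarith : (0:ℝ) < α - 1)).comp h1
    refine h2.congr (fun n => ?_)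
    simp only [Function.comp, hf]
    rw [neg_sub']
    ring_nf
  have hHS : HasSum (fun j : ℕ => f j - f (j + 1)) (f 0) := by
    rw [hsum.hasSum_iff_tendsto_nat]
    simp_rw [hpart]
    simpa using tendsto_const_nhds.sub htend
  have heq : (fun j : ℕ => ((K : ℝ) + j) ^ (1 - α) - ((K : ℝ) + (j + 1)) ^ (1 - α))
      = fun j => f j - f (j + 1) := by
    funext j
    simp only [hf]
    push_cast
    ring_nf
  have hf0 : f 0 = (K : ℝ) ^ (1 - α) := by simp [hf]
  rw [heq, ← hf0]
  exact hHS

private lemma stmt2_tail {α : ℝ} (hα : 1 < α) {K : ℕ} (hK : 1 ≤ K) :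
    (Summable fun j : ℕ => ((K : ℝ) + 1 + j) ^ (-α)) ∧
      ∑' j : ℕ, ((K : ℝ) + 1 + j) ^ (-α) ≤ (K : ℝ) ^ (1 - α) / (α - 1) := by
  have hKpos : (0:ℝ) < K := by exact_mod_cast hK
  have hHS := stmt2_telescope hα hK
  set g : ℕ → ℝ := fun j =>
    (((K : ℝ) + j) ^ (1 - α) - ((K : ℝ) + (j + 1)) ^ (1 - α)) / (α - 1) with hg
  have hpoint : ∀ j : ℕ, ((K : ℝ) + 1 + j) ^ (-α) ≤ g j := by
    intro j
    have ha : (0:ℝ) < (K : ℝ) + j := by positivity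
    have h := stmt2_mvt hα ha
    have hb1 : (K : ℝ) + 1 + j = ((K : ℝ) + j) + 1 := by ring
    have hb2 : (K : ℝ) + (j + 1) = ((K : ℝ) + j) + 1 := by ring
    rw [hb1]
    rw [hg]
    simp only [hb2]
    rw [le_div_iff₀ (by linarith : (0:ℝ) < α - 1)]
    nlinarith [h]
  have hgsum : Summable g := hHS.summable.div_const _
  have hnonneg : ∀ j : ℕ, 0 ≤ ((K : ℝ) + 1 + j) ^ (-α) := by
    intro j
    positivity
  have hlsum : Summable fun j : ℕ => ((K : ℝ) + 1 + j) ^ (-α) :=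
    Summable.of_nonneg_of_le hnonneg hpoint hgsum
  refine ⟨hlsum, ?_⟩
  calc ∑' j : ℕ, ((K : ℝ) + 1 + j) ^ (-α) ≤ ∑' j, g j := Summable.tsum_le_tsum hpoint hlsum hgsum
    _ = (K : ℝ) ^ (1 - α) / (α - 1) := by
        rw [hg, tsum_div_const, hHS.tsum_eq]

set_option maxHeartbeats 2000000 in
theorem stmt_2 (α l T : ℝ) (hα : 1 < α) (hα2 : α ≤ 2) (hl : 0 < l) (hT : 0 < T) :
    ∃ c C : ℝ, 0 < c ∧ c ≤ C ∧
      ∀ ν ∈ Set.Ioc (0:ℝ) 1, ∀ t ∈ Set.Ioc (0:ℝ) T,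
        c * ν ^ (-(1/α)) * t ^ (1 - 1/α) ≤
          (∑' k : ℕ+, ∫ s in (0:ℝ)..t,
            Real.exp (-2 * (((k : ℕ) : ℝ) * Real.pi / l) ^ α * ν * s)) ∧
        (∑' k : ℕ+, ∫ s in (0:ℝ)..t,
            Real.exp (-2 * (((k : ℕ) : ℝ) * Real.pi / l) ^ α * ν * s)) ≤
          C * ν ^ (-(1/α)) * t ^ (1 - 1/α) := by
  have hα0 : (0:ℝ) < α := by linarith
  set P : ℝ := Real.pi / l with hP
  have hPpos : 0 < P := div_pos Real.pi_pos hl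
  set B : ℝ := 2 * P ^ α with hB
  have hBpos : 0 < B := by positivity
  set M : ℝ := B * T with hM
  have hMpos : 0 < M := by positivity
  set c₀ : ℝ := B ^ (-(1/α)) / 2 * Real.exp (-(max 1 M)) with hc0
  set C₀ : ℝ := B ^ (-(1/α)) * α / (α - 1) + T ^ (1/α) with hC0
  have hc0pos : 0 < c₀ := by positivity
  have hC0pos : 0 < C₀ := by
    have h1 : 0 < B ^ (-(1/α)) * α / (α - 1) := by
      apply div_pos (by positivity) (by linarith)
    have h2 : 0 < T ^ (1/α) := Real.rpow_pos_of_pos hT _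
    rw [hC0]
    linarith
  refine ⟨min c₀ C₀, max c₀ C₀, lt_min hc0pos hC0pos,
    le_trans (min_le_left _ _) (le_max_left _ _), ?_⟩
  rintro ν ⟨hν0, hν1⟩ t ⟨ht0, htT⟩
  set A : ℝ := B * ν with hA
  have hApos : 0 < A := by positivity
  -- rewrite the summand
  have hck : ∀ k : ℕ+, 0 < A * ((k : ℕ) : ℝ) ^ α := by
    intro k
    have hk : (0:ℝ) < ((k : ℕ) : ℝ) := by exact_mod_cast k.pos
    positivity
  set F : ℕ+ → ℝ := fun k =>
    (1 - Real.exp (-(A * ((k : ℕ) : ℝ) ^ α * t))) / (A * ((k : ℕ) : ℝ) ^ α) with hF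
  have hS : (∑' k : ℕ+, ∫ s in (0:ℝ)..t,
      Real.exp (-2 * (((k : ℕ) : ℝ) * Real.pi / l) ^ α * ν * s)) = ∑' k : ℕ+, F k := by
    apply tsum_congr
    intro k
    have hk : (0:ℝ) < ((k : ℕ) : ℝ) := by exact_mod_cast k.pos
    have h1 : ∀ s : ℝ, -2 * (((k : ℕ) : ℝ) * Real.pi / l) ^ α * ν * s
        = -(A * ((k : ℕ) : ℝ) ^ α * s) := by
      intro s
      have h2 : (((k : ℕ) : ℝ) * Real.pi / l) ^ α = ((k : ℕ) : ℝ) ^ α * P ^ α := by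
        rw [mul_div_assoc, Real.mul_rpow hk.le hPpos.le]
      rw [h2, hA, hB]
      ring
    simp_rw [h1]
    rw [stmt2_int_exp (hck k) t, hF]
  rw [hS]
  -- basic bounds on F
  have hF_nonneg : ∀ k : ℕ+, 0 ≤ F k := by
    intro k
    rw [hF]
    apply div_nonneg _ (hck k).le
    have : Real.exp (-(A * ((k : ℕ) : ℝ) ^ α * t)) ≤ 1 := by
      rw [Real.exp_le_one_iff]
      nlinarith [(hck k), ht0]
    linarith
  have hF_le_t : ∀ k : ℕ+, F k ≤ t := by
    intro k
    rw [hF, div_le_iff₀ (hck k)]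
    have h := Real.add_one_le_exp (-(A * ((k : ℕ) : ℝ) ^ α * t))
    nlinarith [Real.exp_nonneg (-(A * ((k : ℕ) : ℝ) ^ α * t))]
  have hF_le_inv : ∀ k : ℕ+, F k ≤ 1 / (A * ((k : ℕ) : ℝ) ^ α) := by
    intro k
    rw [hF, div_le_div_iff₀ (hck k) (hck k)]
    nlinarith [Real.exp_nonneg (-(A * ((k : ℕ) : ℝ) ^ α * t)), hck k]
  have hF_ge : ∀ k : ℕ+, t * Real.exp (-(A * ((k : ℕ) : ℝ) ^ α * t)) ≤ F k := by
    intro k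
    rw [hF, le_div_iff₀ (hck k)]
    set x : ℝ := A * ((k : ℕ) : ℝ) ^ α * t with hx
    have h1 := Real.add_one_le_exp x
    have h2 : Real.exp (-x) * Real.exp x = 1 := by
      rw [← Real.exp_add]; simp
    have h3 : 0 < Real.exp (-x) := Real.exp_pos _
    nlinarith [mul_le_mul_of_nonneg_left h1 h3.le]
  -- summability
  have hsumNat : Summable (fun n : ℕ => ((n : ℝ)) ^ (-α)) :=
    Real.summable_nat_rpow.2 (by linarith)
  have hsumP : Summable (fun k : ℕ+ => (((k : ℕ)) : ℝ) ^ (-α)) :=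
    hsumNat.comp_injective PNat.coe_injective
  have hinv_eq : ∀ k : ℕ+, 1 / (A * ((k : ℕ) : ℝ) ^ α)
      = A⁻¹ * (((k : ℕ)) : ℝ) ^ (-α) := by
    intro k
    have hk : (0:ℝ) ≤ ((k : ℕ) : ℝ) := Nat.cast_nonneg _
    rw [Real.rpow_neg hk, one_div, mul_inv]
  have hsumF : Summable F := by
    apply Summable.of_nonneg_of_le hF_nonneg
      (fun k => le_trans (hF_le_inv k) (le_of_eq (hinv_eq k)))
    exact hsumP.mul_left _
  -- the quantity x₀
  have hAt : 0 < A * t := by positivity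
  set x₀ : ℝ := (A * t) ^ (-(1/α)) with hx₀
  have hx0pos : 0 < x₀ := Real.rpow_pos_of_pos hAt _
  have hxα : x₀ ^ α = (A * t)⁻¹ := by
    rw [hx₀, ← Real.rpow_mul hAt.le]
    have h : (-(1/α)) * α = -1 := by field_simp
    rw [h, Real.rpow_neg_one]
  have hx1 : A * x₀ ^ α * t = 1 := by
    rw [hxα]
    field_simp
  -- the quantity E
  set E : ℝ := ν ^ (-(1/α)) * t ^ (1 - 1/α) with hE
  have hEpos : 0 < E := by
    have h1 : 0 < ν ^ (-(1/α)) := Real.rpow_pos_of_pos hν0 _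
    have h2 : 0 < t ^ (1 - 1/α) := Real.rpow_pos_of_pos ht0 _
    positivity
  have hx0t : x₀ * t = B ^ (-(1/α)) * E := by
    have h1 : x₀ = B ^ (-(1/α)) * ν ^ (-(1/α)) * t ^ (-(1/α)) := by
      rw [hx₀, hA, Real.mul_rpow (mul_nonneg hBpos.le hν0.le) ht0.le,
        Real.mul_rpow hBpos.le hν0.le]
    have h2 : t ^ (-(1/α)) * t = t ^ (1 - 1/α) := by
      nth_rewrite 2 [← Real.rpow_one t]
      rw [← Real.rpow_add ht0]
      ring_nf
    rw [h1, hE, ← h2]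
    ring
  -- the embedding ℕ → ℕ+
  have hembinj : Function.Injective (fun i : ℕ => (⟨i + 1, Nat.succ_pos i⟩ : ℕ+)) := by
    intro a b h
    have h2 := congrArg (fun x : ℕ+ => (x : ℕ)) h
    simpa using h2
  set e : Function.Embedding ℕ ℕ+ := ⟨fun i => ⟨i + 1, Nat.succ_pos i⟩, hembinj⟩ with he
  have hmem : ∀ (n : ℕ) (k : ℕ+), k ∈ (Finset.range n).map e ↔ (k : ℕ) ≤ n := by
    intro n k
    simp only [Finset.mem_map, Finset.mem_range, he, Function.Embedding.coeFn_mk]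
    constructor
    · rintro ⟨i, hi, rfl⟩
      exact hi
    · intro hk
      have hk1 := k.2
      refine ⟨(k : ℕ) - 1, lt_of_lt_of_le (Nat.sub_lt hk1 one_pos) hk, ?_⟩
      apply Subtype.ext
      show (k : ℕ) - 1 + 1 = (k : ℕ)
      exact Nat.succ_pred_eq_of_pos hk1
  have hmin : min c₀ C₀ * E ≤ c₀ * E :=
    mul_le_mul_of_nonneg_right (min_le_left _ _) hEpos.le
  have hc0E : c₀ * E = x₀ * t * Real.exp (-(max 1 M)) / 2 := by
    rw [hc0, hx0t]
    ring
  have hC0E : C₀ * E = x₀ * t * α / (α - 1) + T ^ (1/α) * E := by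
    rw [hC0, hx0t]
    ring
  have hAtM' : A * t ≤ M := by
    rw [hA, hM]
    nlinarith
  have htle : t ≤ T ^ (1/α) * E := by
    have h1 : t = t ^ (1/α) * t ^ (1 - 1/α) := by
      rw [← Real.rpow_add ht0]
      norm_num
    have h2 : t ^ (1/α) ≤ T ^ (1/α) := Real.rpow_le_rpow ht0.le htT (by positivity)
    have h3 : (1:ℝ) ≤ ν ^ (-(1/α)) :=
      Real.one_le_rpow_of_pos_of_le_one_of_nonpos hν0 hν1 (by
        rw [neg_nonpos]
        positivity)
    have h4 : (0:ℝ) < t ^ (1 - 1/α) := Real.rpow_pos_of_pos ht0 _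
    have h5 : (0:ℝ) < T ^ (1/α) := Real.rpow_pos_of_pos hT _
    rw [hE]
    nlinarith [Real.rpow_pos_of_pos ht0 (1/α)]
  clear_value P B M c₀ C₀ A F x₀ E
  clear hP hB hM hc0 hC0 hA hF hx₀ hS
  constructor
  · -- LOWER BOUND
    rw [mul_assoc, ← hE]
    by_cases hcase : 2 ≤ x₀
    · set N : ℕ := ⌊x₀⌋₊ with hN
      have hNx : (N : ℝ) ≤ x₀ := Nat.floor_le hx0pos.le
      have hN1 : 1 ≤ N := Nat.le_floor (by exact_mod_cast (by linarith : (1:ℝ) ≤ x₀))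
      have hN1' : (1:ℝ) ≤ (N : ℝ) := by exact_mod_cast hN1
      have hx2N : x₀ ≤ 2 * N := by
        have h := Nat.lt_floor_add_one x₀
        rw [← hN] at h
        linarith
      have hsum_le : ∑ k ∈ (Finset.range N).map e, F k ≤ ∑' k, F k :=
        Summable.sum_le_tsum _ (fun k _ => hF_nonneg k) hsumF
      have hterm : ∀ k ∈ (Finset.range N).map e, t * Real.exp (-1) ≤ F k := by
        intro k hk
        have hkN : ((k : ℕ) : ℝ) ≤ (N : ℝ) := by exact_mod_cast (hmem N k).1 hk
        have hkx : ((k : ℕ) : ℝ) ≤ x₀ := le_trans hkN hNx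
        have hrp : ((k : ℕ) : ℝ) ^ α ≤ x₀ ^ α :=
          Real.rpow_le_rpow (Nat.cast_nonneg _) hkx hα0.le
        have h1 : A * ((k : ℕ) : ℝ) ^ α * t ≤ 1 := by
          rw [← hx1]
          nlinarith [hApos, ht0]
        refine le_trans ?_ (hF_ge k)
        have h2 : Real.exp (-1) ≤ Real.exp (-(A * ((k : ℕ) : ℝ) ^ α * t)) :=
          Real.exp_le_exp.2 (by linarith)
        nlinarith [ht0]
      have hconst : ∑ _k ∈ (Finset.range N).map e, (t * Real.exp (-1))
          = (N : ℝ) * (t * Real.exp (-1)) := by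
        rw [Finset.sum_const, Finset.card_map, Finset.card_range, nsmul_eq_mul]
      have hSge : (N : ℝ) * (t * Real.exp (-1)) ≤ ∑' k, F k := by
        rw [← hconst]
        exact le_trans (Finset.sum_le_sum hterm) hsum_le
      refine le_trans hmin (le_trans ?_ hSge)
      rw [hc0E]
      have hexp1 : Real.exp (-(max 1 M)) ≤ Real.exp (-1) :=
        Real.exp_le_exp.2 (neg_le_neg (le_max_left 1 M))
      nlinarith [mul_le_mul_of_nonneg_left hexp1 (mul_nonneg hx0pos.le ht0.le),
        mul_le_mul_of_nonneg_right hx2N (mul_nonneg ht0.le (Real.exp_pos (-1)).le),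
        mul_pos ht0 (Real.exp_pos (-1))]
    · push_neg at hcase
      have h1 : F 1 ≤ ∑' k, F k := Summable.le_tsum hsumF 1 (fun j _ => hF_nonneg j)
      have hF1 : t * Real.exp (-(max 1 M)) ≤ F 1 := by
        refine le_trans ?_ (hF_ge 1)
        have hc1 : (((1:ℕ+) : ℕ) : ℝ) ^ α = 1 := by
          rw [PNat.one_coe]
          simp [Real.one_rpow]
        have hAtM : A * (((1:ℕ+) : ℕ) : ℝ) ^ α * t ≤ max 1 M := by
          rw [hc1, mul_one]
          exact le_trans hAtM' (le_max_right 1 M)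
        have h2 : Real.exp (-(max 1 M)) ≤ Real.exp (-(A * (((1:ℕ+) : ℕ) : ℝ) ^ α * t)) :=
          Real.exp_le_exp.2 (neg_le_neg hAtM)
        nlinarith [ht0]
      refine le_trans hmin (le_trans ?_ (le_trans hF1 h1))
      rw [hc0E]
      nlinarith [mul_le_mul_of_nonneg_right hcase.le
        (mul_nonneg ht0.le (Real.exp_pos (-(max 1 M))).le)]
  · -- UPPER BOUND
    rw [mul_assoc, ← hE]
    have hmax : C₀ * E ≤ max c₀ C₀ * E :=
      mul_le_mul_of_nonneg_right (le_max_right _ _) hEpos.le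
    refine le_trans ?_ hmax
    set K : ℕ := ⌈x₀⌉₊ with hK
    have hK1 : 1 ≤ K := Nat.one_le_ceil_iff.2 hx0pos
    have hKx : x₀ ≤ (K : ℝ) := Nat.le_ceil x₀
    have hKx1 : (K : ℝ) ≤ x₀ + 1 := (Nat.ceil_lt_add_one hx0pos.le).le
    set s : Finset ℕ+ := (Finset.range K).map e with hs
    have hsplit := Summable.sum_add_tsum_compl (s := s) hsumF
    have hhead : ∑ k ∈ s, F k ≤ (K : ℝ) * t := by
      calc ∑ k ∈ s, F k ≤ ∑ _k ∈ s, t := Finset.sum_le_sum (fun k _ => hF_le_t k)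
        _ = (K : ℝ) * t := by
            have hcard : s.card = K := by
              rw [hs, Finset.card_map, Finset.card_range]
            rw [Finset.sum_const, hcard, nsmul_eq_mul]
    have htail := stmt2_tail hα hK1
    have htails : ∑' (k : ↑((↑s : Set ℕ+)ᶜ)), F ↑k ≤ A⁻¹ * ((K : ℝ) ^ (1 - α) / (α - 1)) := by
      have hle : ∀ x : ↑((↑s : Set ℕ+)ᶜ), K + 1 ≤ ((x : ℕ+) : ℕ) := by
        intro x
        by_contra hcon
        push_neg at hcon
        have hx2 := x.2
        rw [Set.mem_compl_iff, Finset.mem_coe] at hx2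
        exact hx2 ((hmem K x.1).2 (Nat.lt_succ_iff.mp hcon))
      have step : ∑' (k : ↑((↑s : Set ℕ+)ᶜ)), F ↑k
          ≤ ∑' j : ℕ, A⁻¹ * (((K : ℝ) + 1 + j) ^ (-α)) := by
        apply Summable.tsum_le_tsum_of_inj (fun x : ↑((↑s : Set ℕ+)ᶜ) => ((x : ℕ+) : ℕ) - (K + 1))
        · intro a b hab
          have ha := hle a
          have hb := hle b
          have hab' : ((a : ℕ+) : ℕ) - (K + 1) = ((b : ℕ+) : ℕ) - (K + 1) := hab
          have : ((a : ℕ+) : ℕ) = ((b : ℕ+) : ℕ) := by omega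
          exact Subtype.ext (Subtype.ext this)
        · intro c _
          positivity
        · intro x
          have hx := hle x
          have hcast : (K : ℝ) + 1 + ((((x : ℕ+) : ℕ) - (K + 1) : ℕ) : ℝ)
              = (((x : ℕ+) : ℕ) : ℝ) := by
            rw [Nat.cast_sub hx]
            push_cast
            ring
          rw [hcast]
          exact le_trans (hF_le_inv _) (le_of_eq (hinv_eq _))
        · exact hsumF.subtype _
        · exact htail.1.mul_left _
      refine le_trans step ?_
      rw [tsum_mul_left]
      exact mul_le_mul_of_nonneg_left htail.2 (inv_nonneg.2 hApos.le)
    have hKpow : (K : ℝ) ^ (1 - α) ≤ x₀ ^ (1 - α) :=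
      Real.rpow_le_rpow_of_nonpos hx0pos hKx (by linarith)
    have hxx : A⁻¹ * x₀ ^ (1 - α) = x₀ * t := by
      have h1 : x₀ ^ (1 - α) = x₀ * (A * t) := by
        have h2 : (1:ℝ) - α = 1 + (-α) := by ring
        rw [h2, Real.rpow_add hx0pos, Real.rpow_one, Real.rpow_neg hx0pos.le, hxα, inv_inv]
      rw [h1]
      field_simp
    rw [← hsplit, hC0E]
    have htail2 : ∑' (k : ↑((↑s : Set ℕ+)ᶜ)), F ↑k ≤ x₀ * t / (α - 1) := by
      refine le_trans htails ?_
      rw [← hxx]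
      have : A⁻¹ * ((K:ℝ) ^ (1 - α) / (α - 1)) = (A⁻¹ * (K:ℝ) ^ (1 - α)) / (α - 1) := by ring
      rw [this]
      exact (div_le_div_iff_of_pos_right (by linarith : (0:ℝ) < α - 1)).2
        (mul_le_mul_of_nonneg_left hKpow (inv_nonneg.2 hApos.le))
    have hα1 : (0:ℝ) < α - 1 := by linarith
    have hfinal : (K : ℝ) * t + x₀ * t / (α - 1) ≤ x₀ * t * α / (α - 1) + T ^ (1/α) * E := by
      have h6 : (K : ℝ) * t ≤ x₀ * t + t := by nlinarith
      have h7 : x₀ * t + x₀ * t / (α - 1) = x₀ * t * α / (α - 1) := by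
        field_simp
        ring
      linarith
    linarith [hhead, htail2]
end

section
/- Let e_k(y) = √(2/l)·sin(kπy/l) on (0,l) and fix y₀ ∈ (0,l). Then there exists ξ > 0 such that for every k ∈ ℕ, at least one of sin(kπy₀/l)² > ξ or sin((k+1)πy₀/l)² > ξ holds; i.e., for at least every second k, e_k(y₀)² is bounded below by a positive constant depending only on y₀/l. -/
theorem stmt_10 (l y₀ : ℝ) (hl : 0 < l) (hy₀ : 0 < y₀) (hy₀l : y₀ < l) :
    ∃ ξ : ℝ, 0 < ξ ∧ ∀ k : ℕ,
      ξ < Real.sin (k * Real.pi * y₀ / l) ^ 2 ∨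
      ξ < Real.sin ((k + 1) * Real.pi * y₀ / l) ^ 2 := by
  set x : ℝ := Real.pi * y₀ / l with hx
  have hxpos : 0 < x := by positivity
  have hxlt : x < Real.pi := by
    rw [hx, div_lt_iff₀ hl]
    nlinarith [Real.pi_pos]
  have hσ : 0 < Real.sin x := Real.sin_pos_of_pos_of_lt_pi hxpos hxlt
  set σ : ℝ := Real.sin x
  set c : ℝ := Real.cos x
  have hsc : σ ^ 2 + c ^ 2 = 1 := by
    simpa [σ, c] using Real.sin_sq_add_cos_sq x
  refine ⟨σ ^ 2 / 8, by positivity, fun k => ?_⟩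
  by_contra h
  push_neg at h
  obtain ⟨h1, h2⟩ := h
  have e1 : (k : ℝ) * Real.pi * y₀ / l = k * x := by rw [hx]; ring
  have e2 : ((k : ℝ) + 1) * Real.pi * y₀ / l = k * x + x := by rw [hx]; ring
  rw [e1] at h1
  rw [e2, Real.sin_add] at h2
  set A : ℝ := Real.sin (k * x)
  set C : ℝ := Real.cos (k * x)
  have hAC : A ^ 2 + C ^ 2 = 1 := by
    simpa [A, C] using Real.sin_sq_add_cos_sq (k * x)
  have hs1 : σ ^ 2 ≤ 1 := by nlinarith [sq_nonneg c]
  nlinarith [sq_nonneg (2 * A * c + C * σ), sq_nonneg (A * c), sq_nonneg σ,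
    sq_nonneg (C * σ), sq_nonneg A, hσ.le, sq_nonneg c]
end
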